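/- Let α, β, λ be real numbers and B(λ) = [[1 − α(1+β)λ, β²], [−αλ, β]]. Then the spectral (operator 2-) norm of B(λ) equals R_λ(α, β) = (1/√2)(C_λ(α, β) + √(C_λ(α, β)² − 4β²(1 − αλ)²))^{1/2}, where C_λ(α, β) = (1 − α(1+β)λ)² + α²λ² + β²(β² + 1). Equivalently, R_λ(α, β)² is the largest root of ξ² − C_λ(α, β)ξ + β²(1 − αλ)² = 0, the characteristic polynomial of B(λ)ᵀB(λ). -/

import Mathlib

open Matrix Polynomial

/-- The 2×2 matrix `B(λ)` from the analysis of Nesterov's method. -/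
noncomputable def Bmat (α β lam : ℝ) : Matrix (Fin 2) (Fin 2) ℝ :=
  !![1 - α * (1 + β) * lam, β ^ 2; -(α * lam), β]

/-- The spectral (operator 2-) norm of a real matrix, i.e. its largest singular value:
the operator norm of the induced linear map between Euclidean spaces. -/
noncomputable def spectralNorm2 {m n : Type*} [Fintype m] [Fintype n] [DecidableEq n]
    (A : Matrix m n ℝ) : ℝ :=
  ‖LinearMap.toContinuousLinearMap (Matrix.toEuclideanLin A)‖

/-- `C_λ(α, β)`. -/
noncomputable def Clam (α β lam : ℝ) : ℝ :=
  (1 - α * (1 + β) * lam) ^ 2 + α ^ 2 * lam ^ 2 + β ^ 2 * (β ^ 2 + 1)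

/-- `R_λ(α, β) = (1/√2)(C_λ + √(C_λ² − 4β²(1−αλ)²))^{1/2}`. -/
noncomputable def Rlam (α β lam : ℝ) : ℝ :=
  (1 / Real.sqrt 2) *
    Real.sqrt (Clam α β lam +
      Real.sqrt ((Clam α β lam) ^ 2 - 4 * β ^ 2 * (1 - α * lam) ^ 2))

/-! For a real `2 × 2` matrix `A`, `‖A v‖²` is the quadratic form of the Gram matrix
`AᵀA = !![p, r; r, q]`. With `M` the larger root of its characteristic polynomial
`ξ² - (p + q) ξ + (p q - r²)`, one has `(M - p)(M - q) = r²` and `p, q ≤ M`; this makes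
`M ‖v‖² - ‖A v‖²` a positive semidefinite form vanishing at the eigenvector `(r, M - p)`, so
`‖A‖ = √M`. For `B(λ)` the trace of `BᵀB` is `C_λ` and its determinant is
`(det B)² = β²(1 - αλ)²`. -/

/-- The larger root of `ξ² - b ξ + c` (junk when the discriminant is negative). -/
noncomputable def largerRoot (b c : ℝ) : ℝ := (b + √(b ^ 2 - 4 * c)) / 2

theorem largerRoot_nonneg {b c : ℝ} (hb : 0 ≤ b) : 0 ≤ largerRoot b c := by
  unfold largerRoot
  positivity

theorem largerRoot_isRoot {b c : ℝ} (h : 0 ≤ b ^ 2 - 4 * c) :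
    largerRoot b c ^ 2 - b * largerRoot b c + c = 0 := by
  unfold largerRoot
  linear_combination Real.sq_sqrt h / 4

theorem le_largerRoot {b c ξ : ℝ} (h : ξ ^ 2 - b * ξ + c = 0) : ξ ≤ largerRoot b c := by
  have hdisc : b ^ 2 - 4 * c = (2 * ξ - b) ^ 2 := by linear_combination -4 * h
  have : 2 * ξ - b ≤ √(b ^ 2 - 4 * c) := by
    rw [hdisc, Real.sqrt_sq_eq_abs]
    exact le_abs_self _
  unfold largerRoot
  linarith

section Gram

variable {p q r : ℝ}

theorem discrim_gram_nonneg : 0 ≤ (p + q) ^ 2 - 4 * (p * q - r ^ 2) := by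
  nlinarith [sq_nonneg (p - q), sq_nonneg r]

theorem max_le_largerRoot_gram : max p q ≤ largerRoot (p + q) (p * q - r ^ 2) := by
  have hdisc : (p + q) ^ 2 - 4 * (p * q - r ^ 2) = (p - q) ^ 2 + 4 * r ^ 2 := by ring
  have : |p - q| ≤ √((p + q) ^ 2 - 4 * (p * q - r ^ 2)) := by
    rw [← Real.sqrt_sq_eq_abs]
    exact Real.sqrt_le_sqrt (by rw [hdisc]; nlinarith [sq_nonneg r])
  unfold largerRoot
  exact max_le (by linarith [le_abs_self (p - q)]) (by linarith [neg_abs_le (p - q)])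

theorem quadForm_nonneg_of_mul_eq_sq {u w : ℝ} (hu : 0 ≤ u) (hw : 0 ≤ w) (h : u * w = r ^ 2)
    (x y : ℝ) : 0 ≤ u * x ^ 2 - 2 * r * x * y + w * y ^ 2 := by
  rcases hu.eq_or_lt with rfl | hu
  · obtain rfl : r = 0 := by simpa using h.symm
    simpa using mul_nonneg hw (sq_nonneg y)
  · have hsq : u * (u * x ^ 2 - 2 * r * x * y + w * y ^ 2) = (u * x - r * y) ^ 2 := by
      linear_combination y ^ 2 * h
    exact nonneg_of_mul_nonneg_right (hsq ▸ sq_nonneg _) hu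

theorem quadForm_le_of_mul_sub_eq_sq {M : ℝ} (hp : p ≤ M) (hq : q ≤ M)
    (h : (M - p) * (M - q) = r ^ 2) (x y : ℝ) :
    p * x ^ 2 + 2 * r * x * y + q * y ^ 2 ≤ M * (x ^ 2 + y ^ 2) := by
  linarith [quadForm_nonneg_of_mul_eq_sq (sub_nonneg.2 hp) (sub_nonneg.2 hq) h x y]

theorem exists_quadForm_eq_of_mul_sub_eq_sq {M : ℝ} (h : (M - p) * (M - q) = r ^ 2) :
    ∃ x y : ℝ, 0 < x ^ 2 + y ^ 2 ∧
      p * x ^ 2 + 2 * r * x * y + q * y ^ 2 = M * (x ^ 2 + y ^ 2) := by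
  by_cases hr : r = 0
  · subst hr
    rcases mul_eq_zero.1 (h.trans (zero_pow two_ne_zero)) with hM | hM
    · exact ⟨1, 0, by norm_num, by linear_combination -hM⟩
    · exact ⟨0, 1, by norm_num, by linear_combination -hM⟩
  · exact ⟨r, M - p, by positivity, by linear_combination (p - M) * h⟩

end Gram

theorem spectralNorm2_eq_sqrt {m n : Type*} [Fintype m] [Fintype n] [DecidableEq n]
    (A : Matrix m n ℝ) {M : ℝ} (hM : 0 ≤ M)
    (hle : ∀ v, ‖toEuclideanLin A v‖ ^ 2 ≤ M * ‖v‖ ^ 2)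
    (hex : ∃ v, v ≠ 0 ∧ ‖toEuclideanLin A v‖ ^ 2 = M * ‖v‖ ^ 2) :
    spectralNorm2 A = √M := by
  have hsqrt : ∀ v, ‖toEuclideanLin A v‖ ≤ √M * ‖v‖ := fun v =>
    calc ‖toEuclideanLin A v‖ = √(‖toEuclideanLin A v‖ ^ 2) := (Real.sqrt_sq (norm_nonneg _)).symm
      _ ≤ √(M * ‖v‖ ^ 2) := Real.sqrt_le_sqrt (hle v)
      _ = √M * ‖v‖ := by rw [Real.sqrt_mul hM, Real.sqrt_sq (norm_nonneg v)]
  refine ContinuousLinearMap.opNorm_eq_of_bounds (Real.sqrt_nonneg M) hsqrt fun N _ hN => ?_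
  obtain ⟨v, hv, heq⟩ := hex
  have hattained : ‖toEuclideanLin A v‖ = √M * ‖v‖ := by
    rw [← Real.sqrt_sq (norm_nonneg (toEuclideanLin A v)), heq, Real.sqrt_mul hM,
      Real.sqrt_sq (norm_nonneg v)]
  exact le_of_mul_le_mul_right (hattained ▸ hN v) (norm_pos_iff.2 hv)

theorem spectralNorm2_fin_two (A : Matrix (Fin 2) (Fin 2) ℝ) :
    spectralNorm2 A = √(largerRoot (Aᵀ * A).trace (Aᵀ * A).det) := by
  set p := A 0 0 ^ 2 + A 1 0 ^ 2
  set q := A 0 1 ^ 2 + A 1 1 ^ 2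
  set r := A 0 0 * A 0 1 + A 1 0 * A 1 1
  have htrace : (Aᵀ * A).trace = p + q := by
    simp only [trace_fin_two, Matrix.mul_apply, transpose_apply, Fin.sum_univ_two, p, q]
    ring
  have hdet : (Aᵀ * A).det = p * q - r ^ 2 := by
    rw [det_mul, det_transpose, det_fin_two]
    ring
  have hnorm : ∀ v : EuclideanSpace ℝ (Fin 2),
      ‖toEuclideanLin A v‖ ^ 2 = p * v 0 ^ 2 + 2 * r * v 0 * v 1 + q * v 1 ^ 2 := by
    intro v
    simp only [EuclideanSpace.real_norm_sq_eq, ofLp_toLpLin, toLin'_apply, mulVec, dotProduct,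
      Fin.sum_univ_two, p, q, r]
    ring
  rw [htrace, hdet]
  set M := largerRoot (p + q) (p * q - r ^ 2)
  have hroot : (M - p) * (M - q) = r ^ 2 := by
    linear_combination largerRoot_isRoot discrim_gram_nonneg
  have hmax : max p q ≤ M := max_le_largerRoot_gram
  refine spectralNorm2_eq_sqrt A (largerRoot_nonneg (by positivity)) (fun v => ?_) ?_
  · rw [hnorm, EuclideanSpace.real_norm_sq_eq, Fin.sum_univ_two]
    exact quadForm_le_of_mul_sub_eq_sq (le_of_max_le_left hmax) (le_of_max_le_right hmax)
      hroot _ _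
  · obtain ⟨x, y, hxy, heq⟩ := exists_quadForm_eq_of_mul_sub_eq_sq hroot
    have hv : ‖!₂[x, y]‖ ^ 2 = x ^ 2 + y ^ 2 := by
      simp [EuclideanSpace.real_norm_sq_eq, Fin.sum_univ_two]
    refine ⟨!₂[x, y], fun h => ?_, ?_⟩
    · rw [h, norm_zero] at hv
      linarith
    · rw [hnorm, hv]
      simpa using heq

theorem discrim_transpose_mul_self_nonneg (A : Matrix (Fin 2) (Fin 2) ℝ) :
    0 ≤ (Aᵀ * A).trace ^ 2 - 4 * (Aᵀ * A).det := by
  simp only [trace_fin_two, det_fin_two, Matrix.mul_apply, Fin.sum_univ_two, transpose_apply]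
  nlinarith [sq_nonneg (A 0 0 ^ 2 + A 1 0 ^ 2 - A 0 1 ^ 2 - A 1 1 ^ 2),
    sq_nonneg (A 0 0 * A 0 1 + A 1 0 * A 1 1)]

theorem stmt14 (α β lam : ℝ) :
    spectralNorm2 (Bmat α β lam) = Rlam α β lam ∧
    ((Bmat α β lam)ᵀ * Bmat α β lam).charpoly =
      X ^ 2 - C (Clam α β lam) * X + C (β ^ 2 * (1 - α * lam) ^ 2) ∧
    ((Rlam α β lam ^ 2) ^ 2 - Clam α β lam * (Rlam α β lam ^ 2)
        + β ^ 2 * (1 - α * lam) ^ 2 = 0) ∧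
    (∀ ξ : ℝ, ξ ^ 2 - Clam α β lam * ξ + β ^ 2 * (1 - α * lam) ^ 2 = 0 →
      ξ ≤ Rlam α β lam ^ 2) := by
  have htrace : ((Bmat α β lam)ᵀ * Bmat α β lam).trace = Clam α β lam := by
    simp only [Bmat, Clam, trace_fin_two, Matrix.mul_apply, transpose_apply, of_apply, cons_val',
      cons_val_zero, cons_val_one, cons_val_fin_one, Fin.sum_univ_two]
    ring
  have hdet : ((Bmat α β lam)ᵀ * Bmat α β lam).det = β ^ 2 * (1 - α * lam) ^ 2 := by
    rw [det_mul, det_transpose, Bmat, det_fin_two_of]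
    ring
  have hdisc := discrim_transpose_mul_self_nonneg (Bmat α β lam)
  rw [htrace, hdet] at hdisc
  have hR : Rlam α β lam = √(largerRoot (Clam α β lam) (β ^ 2 * (1 - α * lam) ^ 2)) := by
    rw [Rlam, largerRoot, Real.sqrt_div' _ zero_le_two, mul_assoc 4]
    ring
  have hR2 : Rlam α β lam ^ 2 = largerRoot (Clam α β lam) (β ^ 2 * (1 - α * lam) ^ 2) := by
    rw [hR, Real.sq_sqrt (largerRoot_nonneg (by unfold Clam; positivity))]
  refine ⟨?_, ?_, ?_, fun ξ hξ => ?_⟩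
  · rw [spectralNorm2_fin_two, htrace, hdet, hR]
  · rw [charpoly_fin_two, htrace, hdet]
  · rw [hR2]
    exact largerRoot_isRoot hdisc
  · rw [hR2]
    exact le_largerRoot hξ
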